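/- arXiv:1912.01370 — 3 statements merged into one kernel-verified Lean document; each statement's English description precedes it below -/
import Mathlib

section
/- Let z_t satisfy the Loewner–Kufarev equation ∂_t z_t(w) = −w p_t(w) ∂_w z_t(w) on the exterior of the unit disk with the Laplacian-growth density ρ_t(e^{iφ}) = (Q/2π)|z_t'(e^{iφ})|^{−2}. Then the boundary parametrization z_t(e^{iφ}) satisfies the Laplacian growth equation Im( ∂_t z̄_t(e^{−iφ}) · ∂_φ z_t(e^{iφ}) ) = Q/(2π). -/
open Complex

/- On the unit circle `z̄ₜ(e^{-iφ}) = conj (zₜ(e^{iφ}))`, and substituting the Loewner–Kufarev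
velocity `∂ₜz = -u pₜ z'` and `∂_φ z = i u z'` gives
`conj(∂ₜz) · ∂_φ z = -i |u|² |z'|² conj pₜ`, whose imaginary part is `-|z'|² Re pₜ`.
The Laplacian-growth density `Re pₜ = -(Q/2π)/|z'|²` then yields `Q/2π`. -/

theorem im_conj_neg_mul_mul_I_mul (u a c : ℂ) (hu : ‖u‖ = 1) :
    ((starRingEnd ℂ) (-(u * a * c)) * (I * u * c)).im = -(‖c‖ ^ 2 * a.re) := by
  have hconj : (starRingEnd ℂ) (-(u * a * c)) * (I * u * c)
      = -(((starRingEnd ℂ) u * u) * ((starRingEnd ℂ) c * c) * I * (starRingEnd ℂ) a) := by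
    simp only [map_neg, map_mul]
    ring
  rw [hconj, conj_mul', conj_mul', hu]
  simp [mul_im, mul_re, ← ofReal_pow]

theorem laplacian_growth_equation_general
    (Q : ℝ) (zw p : ℝ → ℂ → ℂ) (t φ : ℝ)
    (u : ℂ) (hu : u = Complex.exp (φ * Complex.I))
    (dtz dφz : ℂ)
    (hdt : dtz = -(u * p t u * zw t u))
    (hdφ : dφz = Complex.I * u * zw t u)
    (hzw : zw t u ≠ 0)
    (hre : (p t u).re = -(Q / (2 * Real.pi)) / ‖zw t u‖ ^ 2) :
    ((starRingEnd ℂ) dtz * dφz).im = Q / (2 * Real.pi) := by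
  have hu_norm : ‖u‖ = 1 := by rw [hu, norm_exp_ofReal_mul_I]
  rw [hdt, hdφ, im_conj_neg_mul_mul_I_mul _ _ _ hu_norm, hre]
  have hzw_norm : ‖zw t u‖ ≠ 0 := norm_ne_zero_iff.mpr hzw
  field_simp

/-- the Loewner–Kufarev equation with the Laplacian-growth density
`ρ_t(e^{iφ}) = (Q/2π)|z_t'(e^{iφ})|⁻²` (i.e. `Re p_t = −(Q/2π)/|z_t'|²` on the circle)
implies the Laplacian growth equation
`Im( ∂ₜ z̄_t(e^{−iφ}) · ∂_φ z_t(e^{iφ}) ) = Q/(2π)`. -/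
theorem laplacian_growth_equation
    (Q : ℝ) (z zw p : ℝ → ℂ → ℂ) (t φ : ℝ)
    (u : ℂ) (hu : u = Complex.exp (φ * Complex.I))
    (dtz dφz : ℂ)
    (ht : HasDerivAt (fun τ => z τ u) dtz t)
    (hdt : dtz = -(u * p t u * zw t u))
    (hφ : HasDerivAt (fun ψ : ℝ => z t (Complex.exp (ψ * Complex.I))) dφz φ)
    (hdφ : dφz = Complex.I * u * zw t u)
    (hzw : zw t u ≠ 0)
    (hre : (p t u).re = -(Q / (2 * Real.pi)) / ‖zw t u‖ ^ 2) :
    ((starRingEnd ℂ) dtz * dφz).im = Q / (2 * Real.pi) :=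
  laplacian_growth_equation_general Q zw p t φ u hu dtz dφz hdt hdφ hzw hre
end

section
/- (Hadamard variational formula, exterior disk model) Let D_t be exterior Jordan domains evolving so that the boundary moves with normal velocity v_n (normal pointing into D_t), and let G_t(z, z') be the Dirichlet Green's function of D_t. Then d/dt G_t(z, z') = (1/2π) ∮_{∂D_t} ∂_n G_t(z, s) ∂_n G_t(z', s) v_n(s) |ds| for fixed z, z' ∈ D_t. Equivalently, in terms of Poisson kernels, dG_t(z,z')/dt = (1/2π) ∮ H_t(z,s) H_t(z',s) v_n(s) |ds|. -/
/-!
Write `a = w_t(z)`, `b = w_t(z')` and `S_u(e) = (e + u)/(e - u)`. Differentiating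
`log |(a - b)/(1 - ā b)|` along the flow `ȧ = p_t(a) a`, `ḃ = p_t(b) b` gives
`Re (c_a p_t(a) + c_b p_t(b))` with explicit rational weights `c_a, c_b`. As `p_t` is the
Schwarz integral of the real density `ρ_t`, this is `(1/2π) ∫ Re (c_a S_a + c_b S_b) ρ_t dφ`.
On the unit circle `conj S_u = (1 + ū e)/(1 - ū e)`, and a rational identity turns
`Re (c_a S_a + c_b S_b)` into the product of Poisson kernels `Re S_a · Re S_b`; the reflection
`u ↦ 1/ū` flips the sign of each factor, giving `K_t(z, φ) K_t(z', φ)`.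
-/

open Complex ComplexConjugate
open scoped RealInnerProductSpace

theorem HasDerivAt.log_norm {E : Type*} [NormedAddCommGroup E] [InnerProductSpace ℝ E]
    {f : ℝ → E} {f' : E} {t : ℝ} (hf : HasDerivAt f f' t) (h0 : f t ≠ 0) :
    HasDerivAt (fun τ => Real.log ‖f τ‖) (⟪f t, f'⟫ / ‖f t‖ ^ 2) t := by
  have hsq : ‖f t‖ ^ 2 ≠ 0 := by positivity
  have hlog : (fun τ => Real.log ‖f τ‖) = fun τ => Real.log (‖f τ‖ ^ 2) / 2 := by
    funext τ
    rw [Real.log_pow]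
    push_cast
    ring
  rw [hlog]
  exact ((hf.norm_sq.log hsq).div_const 2).congr_deriv (by ring)

theorem Complex.inner_div_norm_sq (z w : ℂ) : ⟪z, w⟫ / ‖z‖ ^ 2 = (w / z).re := by
  rw [Complex.inner, Complex.div_re, ← Complex.normSq_eq_norm_sq]
  simp only [mul_re, conj_re, conj_im]
  ring

theorem hasDerivAt_log_norm_blaschke {f g : ℝ → ℂ} {f' g' : ℂ} {t : ℝ}
    (hf : HasDerivAt f f' t) (hg : HasDerivAt g g' t) (hfg : f t ≠ g t)
    (hden : 1 - conj (f t) * g t ≠ 0) :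
    HasDerivAt (fun τ => Real.log ‖(f τ - g τ) / (1 - conj (f τ) * g τ)‖)
      ((f' - g') / (f t - g t) +
        (conj f' * g t + conj (f t) * g') / (1 - conj (f t) * g t)).re t := by
  have hF : HasDerivAt (fun τ => (f τ - g τ) / (1 - conj (f τ) * g τ))
      (((f' - g') * (1 - conj (f t) * g t)
        - (f t - g t) * (0 - (conj f' * g t + conj (f t) * g'))) / (1 - conj (f t) * g t) ^ 2) t :=
    (hf.sub hg).div ((hasDerivAt_const t 1).sub (hf.star.mul hg)) hden
  convert hF.log_norm (div_ne_zero (sub_ne_zero.2 hfg) hden) using 1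
  rw [Complex.inner_div_norm_sq]
  congr 1
  have hN : f t - g t ≠ 0 := sub_ne_zero.2 hfg
  generalize f t - g t = N at hN ⊢
  generalize 1 - conj (f t) * g t = D at hden ⊢
  field_simp
  ring

/-- `c_a = greenWeight a b` and `c_b = greenWeight b a` are the weights of `ȧ / a` and `ḃ / b`
in the variation of `log |(a - b)/(1 - ā b)|`. -/
noncomputable def greenWeight (a b : ℂ) : ℂ := a / (a - b) + a * conj b / (1 - a * conj b)

theorem re_blaschke_variation_eq (a b P Q : ℂ) :
    ((P * a - Q * b) / (a - b) + (conj (P * a) * b + conj a * (Q * b)) / (1 - conj a * b)).re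
      = (greenWeight a b * P + greenWeight b a * Q).re := by
  have hconj : (conj (P * a) * b / (1 - conj a * b)).re
      = (P * (a * conj b / (1 - a * conj b))).re := by
    rw [← conj_re]
    simp only [map_div₀, map_mul, map_sub, map_one, conj_conj]
    ring_nf
  have hba : b / (b - a) = -(b / (a - b)) := by rw [← neg_sub a b, div_neg]
  have hsplit : (P * a - Q * b) / (a - b)
      + (conj (P * a) * b + conj a * (Q * b)) / (1 - conj a * b)
      = greenWeight a b * P + greenWeight b a * Q
        + (conj (P * a) * b / (1 - conj a * b) - P * (a * conj b / (1 - a * conj b))) := by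
    simp only [greenWeight, hba]
    ring
  rw [hsplit, add_re, sub_re, hconj, sub_self, add_zero]

theorem conj_greenWeight (a b : ℂ) : conj (greenWeight a b) = greenWeight (conj a) (conj b) := by
  simp only [greenWeight, map_add, map_div₀, map_mul, map_sub, map_one, conj_conj]

theorem one_sub_mul_ne_zero_of_one_lt_norm {x y : ℂ} (hx : 1 < ‖x‖) (hy : 1 ≤ ‖y‖) :
    1 - x * y ≠ 0 := by
  intro h
  have hxy : ‖x * y‖ = 1 := by rw [← sub_eq_zero.1 h, norm_one]
  rw [norm_mul] at hxy
  nlinarith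

theorem conj_schwarz_kernel {e : ℂ} (he : ‖e‖ = 1) (u : ℂ) :
    conj ((e + u) / (e - u)) = (1 + conj u * e) / (1 - conj u * e) := by
  have he0 : e ≠ 0 := norm_ne_zero_iff.1 (by rw [he]; exact one_ne_zero)
  rw [map_div₀, map_add, map_sub, ← inv_eq_conj he, ← mul_div_mul_right _ _ he0, add_mul,
    sub_mul, inv_mul_cancel₀ he0]

theorem schwarz_kernel_conj_inv {e u : ℂ} (he : ‖e‖ = 1) (hu : u ≠ 0) :
    (e + (conj u)⁻¹) / (e - (conj u)⁻¹) = -conj ((e + u) / (e - u)) := by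
  have hu' : conj u ≠ 0 := (map_ne_zero _).2 hu
  rw [conj_schwarz_kernel he, ← mul_div_mul_right _ _ hu', add_mul, sub_mul,
    inv_mul_cancel₀ hu', ← div_neg, neg_sub, mul_comm e, add_comm]

/-- With `A = ā`, `B = b̄` and `conj S_u = (1 + ū e)/(1 - ū e)`, this is
`2 (X + conj X) = (S_a + conj S_a)(S_b + conj S_b)` for `X = c_a S_a + c_b S_b`. -/
theorem schwarz_kernel_weight_identity {K : Type*} [Field K] (e a b A B : K)
    (hab : a - b ≠ 0) (hAB : A - B ≠ 0) (hea : e - a ≠ 0) (heb : e - b ≠ 0)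
    (hAe : 1 - A * e ≠ 0) (hBe : 1 - B * e ≠ 0)
    (hAb : 1 - A * b ≠ 0) (haB : 1 - a * B ≠ 0) :
    2 * ((a / (a - b) + a * B / (1 - a * B)) * ((e + a) / (e - a))
      + (b / (b - a) + b * A / (1 - b * A)) * ((e + b) / (e - b))
      + ((A / (A - B) + A * b / (1 - A * b)) * ((1 + A * e) / (1 - A * e))
      + (B / (B - A) + B * a / (1 - B * a)) * ((1 + B * e) / (1 - B * e))))
    = ((e + a) / (e - a) + (1 + A * e) / (1 - A * e)) *
        ((e + b) / (e - b) + (1 + B * e) / (1 - B * e)) := by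
  -- the denominators in the form `field_simp` normalizes them to
  have hba : b - a ≠ 0 := sub_ne_zero.2 (sub_ne_zero.1 hab).symm
  have hBA : B - A ≠ 0 := sub_ne_zero.2 (sub_ne_zero.1 hAB).symm
  have hbA : 1 - b * A ≠ 0 := by rwa [mul_comm]
  have hBa : 1 - B * a ≠ 0 := by rwa [mul_comm]
  have heA : 1 - e * A ≠ 0 := by rwa [mul_comm]
  have heB : 1 - e * B ≠ 0 := by rwa [mul_comm]
  field_simp
  ring

theorem re_greenWeight_mul_schwarz {e a b : ℂ} (he : ‖e‖ = 1) (ha : 1 < ‖a‖)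
    (hb : 1 < ‖b‖) (hab : a ≠ b) :
    (greenWeight a b * ((e + a) / (e - a)) + greenWeight b a * ((e + b) / (e - b))).re
      = ((e + (conj a)⁻¹) / (e - (conj a)⁻¹)).re
        * ((e + (conj b)⁻¹) / (e - (conj b)⁻¹)).re := by
  have ha0 : a ≠ 0 := norm_ne_zero_iff.1 (by linarith)
  have hb0 : b ≠ 0 := norm_ne_zero_iff.1 (by linarith)
  have hea : e - a ≠ 0 := sub_ne_zero.2 fun h => by rw [h] at he; linarith
  have heb : e - b ≠ 0 := sub_ne_zero.2 fun h => by rw [h] at he; linarith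
  have hca : 1 < ‖conj a‖ := by rwa [norm_conj]
  have hcb : 1 < ‖conj b‖ := by rwa [norm_conj]
  have hid := schwarz_kernel_weight_identity e a b (conj a) (conj b) (sub_ne_zero.2 hab)
    (sub_ne_zero.2 ((RingHom.injective _).ne hab)) hea heb
    (one_sub_mul_ne_zero_of_one_lt_norm hca he.ge) (one_sub_mul_ne_zero_of_one_lt_norm hcb he.ge)
    (one_sub_mul_ne_zero_of_one_lt_norm hca hb.le) (one_sub_mul_ne_zero_of_one_lt_norm ha hcb.le)
  rw [schwarz_kernel_conj_inv he ha0, schwarz_kernel_conj_inv he hb0, neg_re, neg_re,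
    neg_mul_neg, conj_re, conj_re]
  apply ofReal_injective
  rw [ofReal_mul, re_eq_add_conj, re_eq_add_conj, re_eq_add_conj, map_add, map_mul, map_mul,
    conj_greenWeight, conj_greenWeight, conj_schwarz_kernel he, conj_schwarz_kernel he]
  simp only [greenWeight, conj_conj]
  linear_combination hid / 4

theorem re_const_mul_intervalIntegral_add {f g : ℝ → ℂ} {x y : ℝ}
    (hf : IntervalIntegrable f MeasureTheory.volume x y)
    (hg : IntervalIntegrable g MeasureTheory.volume x y) (c d : ℂ) (r : ℝ) :
    (c * ((r : ℂ) * ∫ φ in x..y, f φ) + d * ((r : ℂ) * ∫ φ in x..y, g φ)).re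
      = r * ∫ φ in x..y, (c * f φ + d * g φ).re := by
  have hre := intervalIntegral.intervalIntegral_re ((hf.const_mul c).add (hg.const_mul d))
  simp only [RCLike.re_to_complex] at hre
  rw [hre, intervalIntegral.integral_add (hf.const_mul c) (hg.const_mul d),
    intervalIntegral.integral_const_mul, intervalIntegral.integral_const_mul, ← re_ofReal_mul]
  ring_nf

theorem intervalIntegrable_schwarz_mul {ρ : ℝ → ℝ} (hρ : Continuous ρ) {u : ℂ}
    (hu : ‖u‖ ≠ 1) (x y : ℝ) :
    IntervalIntegrable (fun φ : ℝ => (exp (φ * I) + u) / (exp (φ * I) - u) * (ρ φ : ℂ))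
      MeasureTheory.volume x y := by
  have hden : ∀ φ : ℝ, exp (φ * I) - u ≠ 0 := fun φ h =>
    hu (by rw [← sub_eq_zero.1 h, norm_exp_ofReal_mul_I])
  exact (((by fun_prop : Continuous fun φ : ℝ => exp (φ * I) + u).div (by fun_prop) hden).mul
    (by fun_prop)).intervalIntegrable x y

/-- Here `G_t(z, z') = log |(w_t(z) - w_t(z'))/(1 - conj (w_t(z)) w_t(z'))|`, and the boundary
integral `(1/2π) ∮ H_t(z,s) H_t(z',s) v_n(s) |ds|` is pulled back to the circle by
`s = z_t(e^{iφ})`, using `H_t = |w_t'| K_t`, `v_n = |z_t'| ρ_t`, `|ds| = |z_t'| dφ` and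
`|w_t'| |z_t'| = 1`; the Poisson kernel factor is `K_t(ζ, φ) = Re ((e^{iφ} + ξ)/(e^{iφ} - ξ))`
with `ξ = 1 / conj (w_t(ζ))`. -/
theorem hadamard_variational_formula_general
    (w : ℝ → ℂ → ℂ) (p : ℝ → ℂ → ℂ) (ρ : ℝ → ℝ → ℝ)
    (hρcont : Continuous fun q : ℝ × ℝ => ρ q.1 q.2)
    (hp : ∀ t u, p t u = (((2 * Real.pi : ℝ)) : ℂ)⁻¹ *
      ∫ φ in (0:ℝ)..(2 * Real.pi),
        ((Complex.exp (φ * Complex.I) + u) / (Complex.exp (φ * Complex.I) - u)) *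
          ((ρ t φ : ℝ) : ℂ))
    (hflow : ∀ ζ t, HasDerivAt (fun τ => w τ ζ) (p t (w t ζ) * w t ζ) t)
    (z z' : ℂ) (t : ℝ)
    (hz : 1 < ‖w t z‖) (hz' : 1 < ‖w t z'‖)
    (hne : w t z ≠ w t z') :
    HasDerivAt
      (fun τ => Real.log
        ‖(w τ z - w τ z') / (1 - (starRingEnd ℂ) (w τ z) * w τ z')‖)
      ((2 * Real.pi)⁻¹ *
        ∫ φ in (0:ℝ)..(2 * Real.pi),
          ((Complex.exp (φ * Complex.I) + ((starRingEnd ℂ) (w t z))⁻¹) /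
            (Complex.exp (φ * Complex.I) - ((starRingEnd ℂ) (w t z))⁻¹)).re *
          ((Complex.exp (φ * Complex.I) + ((starRingEnd ℂ) (w t z'))⁻¹) /
            (Complex.exp (φ * Complex.I) - ((starRingEnd ℂ) (w t z'))⁻¹)).re *
          ρ t φ) t := by
  have hden : 1 - conj (w t z) * w t z' ≠ 0 :=
    one_sub_mul_ne_zero_of_one_lt_norm (by rwa [norm_conj]) hz'.le
  have hρ : Continuous (ρ t) := hρcont.comp (continuous_const.prodMk continuous_id)
  refine (hasDerivAt_log_norm_blaschke (hflow z t) (hflow z' t) hne hden).congr_deriv ?_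
  rw [re_blaschke_variation_eq, hp, hp, ← ofReal_inv, re_const_mul_intervalIntegral_add
    (intervalIntegrable_schwarz_mul hρ hz.ne' _ _)
    (intervalIntegrable_schwarz_mul hρ hz'.ne' _ _)]
  congr 1
  refine intervalIntegral.integral_congr fun φ _ => ?_
  rw [← mul_assoc, ← mul_assoc, ← add_mul, re_mul_ofReal,
    re_greenWeight_mul_schwarz (norm_exp_ofReal_mul_I φ) hz hz' hne]

/-- Hadamard variational formula in the Loewner–Kufarev model.
For the inverse uniformization flow `dw_t/dt = p_t(w_t) w_t` with Schwarz-integral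
`p_t` of density `ρ_t ≥ 0`, the Green's function
`G_t(z,z') = log |(w_t(z)−w_t(z'))/(1−conj(w_t(z)) w_t(z'))|` varies as
`dG_t(z,z')/dt = (1/2π) ∮_{∂D_t} H_t(z,s) H_t(z',s) v_n(s) |ds|`.
Pulled back to the circle (`s = z_t(e^{iφ})`, `H_t = |w_t'| K`, `v_n = |z_t'| ρ_t`,
`|ds| = |z_t'| dφ`, `|w_t'||z_t'| = 1`), the right-hand side reads
`(1/2π) ∫₀^{2π} K_t(z,φ) K_t(z',φ) ρ_t(φ) dφ`, with the Poisson kernel factor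
`K_t(ζ,φ) = Re((e^{iφ}+ξ)/(e^{iφ}−ξ))`, `ξ = 1/conj(w_t(ζ))`. -/
theorem hadamard_variational_formula
    (w : ℝ → ℂ → ℂ) (p : ℝ → ℂ → ℂ) (ρ : ℝ → ℝ → ℝ)
    (hρpos : ∀ t φ, 0 ≤ ρ t φ)
    (hρcont : Continuous fun q : ℝ × ℝ => ρ q.1 q.2)
    (hp : ∀ t u, p t u = (((2 * Real.pi : ℝ)) : ℂ)⁻¹ *
      ∫ φ in (0:ℝ)..(2 * Real.pi),
        ((Complex.exp (φ * Complex.I) + u) / (Complex.exp (φ * Complex.I) - u)) *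
          ((ρ t φ : ℝ) : ℂ))
    (hflow : ∀ ζ t, HasDerivAt (fun τ => w τ ζ) (p t (w t ζ) * w t ζ) t)
    (z z' : ℂ) (t : ℝ)
    (hz : 1 < ‖w t z‖) (hz' : 1 < ‖w t z'‖)
    (hne : w t z ≠ w t z') :
    HasDerivAt
      (fun τ => Real.log
        ‖(w τ z - w τ z') / (1 - (starRingEnd ℂ) (w τ z) * w τ z')‖)
      ((2 * Real.pi)⁻¹ *
        ∫ φ in (0:ℝ)..(2 * Real.pi),
          ((Complex.exp (φ * Complex.I) + ((starRingEnd ℂ) (w t z))⁻¹) /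
            (Complex.exp (φ * Complex.I) - ((starRingEnd ℂ) (w t z))⁻¹)).re *
          ((Complex.exp (φ * Complex.I) + ((starRingEnd ℂ) (w t z'))⁻¹) /
            (Complex.exp (φ * Complex.I) - ((starRingEnd ℂ) (w t z'))⁻¹)).re *
          ρ t φ) t :=
  hadamard_variational_formula_general w p ρ hρcont hp hflow z z' t hz hz' hne
end

section
/- (Schwarz function of an analytic Jordan curve) Let Γ be an analytic Jordan curve. Then there exist an open neighborhood U of Γ and a holomorphic function S: U → ℂ such that S(z) = z̄ for all z ∈ Γ, and S is unique on any connected neighborhood of Γ. Moreover S satisfies S'(z) = (dz̄/dz) along Γ, and |S'(z)| = 1 for z ∈ Γ. -/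
/-!
Let `σ(w) = 1 / w̄` be the reflection in the unit circle. The function `w ↦ conj (γ (σ w))`
is holomorphic wherever `σ w` lies in the annulus, and agrees with `conj ∘ γ` on the circle,
where `σ` is the identity. Transporting it to `Γ` through the holomorphic inverse of `γ` gives
the Schwarz function `S (γ w) = conj (γ (σ w))`; on `Γ` its derivative is
`-conj (γ' w) / (w² γ' w)`, of modulus one. Uniqueness is the identity theorem: `Γ` has no
isolated points, because `γ` has nonzero derivative along the circle.
-/

open Complex Filter Metric Set
open scoped Topology ComplexConjugate

section InverseFunction

variable {𝕜 : Type*} [NontriviallyNormedField 𝕜] [CompleteSpace 𝕜] {f : 𝕜 → 𝕜}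

theorem HasStrictDerivAt.invFunOn {f' a : 𝕜} {s : Set 𝕜} (hf : HasStrictDerivAt f f' a)
    (hf' : f' ≠ 0) (hs : s ∈ 𝓝 a) (hinj : InjOn f s) :
    HasStrictDerivAt (Function.invFunOn f s) f'⁻¹ (f a) :=
  hf.to_local_left_inverse hf' (mem_of_superset hs fun _ hx => hinj.leftInvOn_invFunOn hx)

theorem IsOpen.image_of_hasStrictDerivAt {f' : 𝕜 → 𝕜} {s : Set 𝕜} (hs : IsOpen s)
    (hf : ∀ x ∈ s, HasStrictDerivAt f (f' x) x) (hf' : ∀ x ∈ s, f' x ≠ 0) :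
    IsOpen (f '' s) := by
  refine isOpen_iff_mem_nhds.2 ?_
  rintro _ ⟨x, hx, rfl⟩
  rw [← (hf x hx).map_nhds_eq (hf' x hx)]
  exact image_mem_map (hs.mem_nhds hx)

end InverseFunction

theorem frequently_mem_image_sphere {γ : ℂ → ℂ} {γ' c : ℂ} {R θ : ℝ} (hR : R ≠ 0)
    (hγ : HasDerivAt γ γ' (circleMap c R θ)) (hγ' : γ' ≠ 0) :
    ∃ᶠ z in 𝓝[≠] γ (circleMap c R θ), z ∈ γ '' sphere c |R| := by
  have hderiv := hγ.comp θ (hasDerivAt_circleMap c R θ)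
  have hne : γ' * (circleMap 0 R θ * I) ≠ 0 :=
    mul_ne_zero hγ' (mul_ne_zero (circleMap_ne_center hR) I_ne_zero)
  refine (hderiv.tendsto_nhdsNE hne).frequently (.of_forall fun θ' => ?_)
  exact mem_image_of_mem γ (circleMap_mem_sphere' c R θ')

noncomputable def circleReflection (γ : ℂ → ℂ) (w : ℂ) : ℂ := conj (γ (conj w⁻¹))

theorem conj_inv_of_mem_unit_sphere {w : ℂ} (hw : w ∈ sphere (0 : ℂ) 1) : conj w⁻¹ = w := by
  rw [inv_eq_conj (by simpa using hw), conj_conj]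

theorem isOpen_inter_conj_inv_preimage {A : Set ℂ} (hA : IsOpen A) :
    IsOpen ({0}ᶜ ∩ (fun w => conj w⁻¹) ⁻¹' A ∩ A) :=
  ((continuous_conj.comp_continuousOn (continuousOn_inv₀ (G₀ := ℂ))).isOpen_inter_preimage
    isOpen_compl_singleton hA).inter hA

theorem unit_sphere_subset_inter_conj_inv_preimage {A : Set ℂ} (hA : sphere (0 : ℂ) 1 ⊆ A) :
    sphere (0 : ℂ) 1 ⊆ {0}ᶜ ∩ (fun w => conj w⁻¹) ⁻¹' A ∩ A := fun w hw =>
  ⟨⟨ne_zero_of_mem_unit_sphere ⟨w, hw⟩, show conj w⁻¹ ∈ A by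
    rw [conj_inv_of_mem_unit_sphere hw]; exact hA hw⟩, hA hw⟩

theorem circleReflection_of_mem_unit_sphere (γ : ℂ → ℂ) {w : ℂ} (hw : w ∈ sphere (0 : ℂ) 1) :
    circleReflection γ w = conj (γ w) := by
  rw [circleReflection, conj_inv_of_mem_unit_sphere hw]

theorem hasDerivAt_circleReflection {γ : ℂ → ℂ} {γ' w : ℂ} (hγ : HasDerivAt γ γ' (conj w⁻¹))
    (hw : w ≠ 0) : HasDerivAt (circleReflection γ) (-conj γ' / w ^ 2) w := by
  have hconj : HasDerivAt (conj ∘ γ ∘ conj) (conj γ') w⁻¹ := by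
    simpa using hγ.conj_conj
  rw [neg_div, div_eq_mul_inv, ← mul_neg]
  exact hconj.comp w (hasDerivAt_inv hw)

theorem norm_neg_conj_div_sq_div {w d : ℂ} (hw : w ∈ sphere (0 : ℂ) 1) (hd : d ≠ 0) :
    ‖-conj d / w ^ 2 / d‖ = 1 := by
  rw [norm_div, norm_div, norm_neg, norm_conj, norm_pow, mem_sphere_zero_iff_norm.1 hw, one_pow,
    div_one, div_self (norm_ne_zero_iff.2 hd)]

noncomputable def schwarzFunction (γ : ℂ → ℂ) (A : Set ℂ) : ℂ → ℂ :=
  circleReflection γ ∘ Function.invFunOn γ A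

theorem schwarzFunction_apply_image {γ : ℂ → ℂ} {A : Set ℂ} (hinj : InjOn γ A) {w : ℂ}
    (hw : w ∈ A) : schwarzFunction γ A (γ w) = circleReflection γ w := by
  rw [schwarzFunction, Function.comp_apply, hinj.leftInvOn_invFunOn hw]

theorem hasDerivAt_schwarzFunction {γ : ℂ → ℂ} {A : Set ℂ} (hA : IsOpen A) (hinj : InjOn γ A)
    {w γ' ρ' : ℂ} (hw : w ∈ A) (hγ : HasStrictDerivAt γ γ' w) (hγ' : γ' ≠ 0)
    (hρ : HasDerivAt (circleReflection γ) ρ' w) :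
    HasDerivAt (schwarzFunction γ A) (ρ' / γ') (γ w) := by
  rw [← hinj.leftInvOn_invFunOn hw] at hρ
  rw [div_eq_mul_inv]
  exact hρ.comp (γ w) (hγ.invFunOn hγ' (hA.mem_nhds hw) hinj).hasDerivAt

/-- Schwarz function of an analytic Jordan curve: if `Γ = γ(∂𝔻)` for `γ`
holomorphic, injective, with nonvanishing derivative on an annulus `A` around the unit
circle, then there is an open neighborhood `U ⊇ Γ` and a holomorphic `S : U → ℂ` with
`S(z) = z̄` on `Γ` and `|S'(z)| = 1` on `Γ`; moreover `S` is unique on any connected open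
neighborhood of `Γ`. -/
theorem schwarz_function_exists_unique
    (A : Set ℂ) (hA : IsOpen A) (hcirc : Metric.sphere (0:ℂ) 1 ⊆ A)
    (γ : ℂ → ℂ) (hγ : DifferentiableOn ℂ γ A) (hinj : Set.InjOn γ A)
    (hderiv : ∀ w ∈ A, deriv γ w ≠ 0)
    (Γ : Set ℂ) (hΓ : Γ = γ '' Metric.sphere (0:ℂ) 1) :
    (∃ U : Set ℂ, IsOpen U ∧ Γ ⊆ U ∧ ∃ S : ℂ → ℂ,
      DifferentiableOn ℂ S U ∧ (∀ z ∈ Γ, S z = (starRingEnd ℂ) z)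
      ∧ (∀ z ∈ Γ, ‖deriv S z‖ = 1))
    ∧ (∀ V : Set ℂ, IsOpen V → IsPreconnected V → Γ ⊆ V →
        ∀ S₁ S₂ : ℂ → ℂ, DifferentiableOn ℂ S₁ V → DifferentiableOn ℂ S₂ V →
          (∀ z ∈ Γ, S₁ z = (starRingEnd ℂ) z) → (∀ z ∈ Γ, S₂ z = (starRingEnd ℂ) z) →
          Set.EqOn S₁ S₂ V) := by
  subst hΓ
  have hstrict : ∀ w ∈ A, HasStrictDerivAt γ (deriv γ w) w := fun w hw =>
    (hγ.analyticAt (hA.mem_nhds hw)).hasStrictDerivAt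
  refine ⟨?_, fun V hV hVconn hΓV S₁ S₂ hS₁ hS₂ hS₁Γ hS₂Γ => ?_⟩
  · set A₀ := {0}ᶜ ∩ (fun w => conj w⁻¹) ⁻¹' A ∩ A
    have hsphere : sphere 0 1 ⊆ A₀ := unit_sphere_subset_inter_conj_inv_preimage hcirc
    have hS : ∀ w ∈ A₀, HasDerivAt (schwarzFunction γ A)
        (-conj (deriv γ (conj w⁻¹)) / w ^ 2 / deriv γ w) (γ w) := fun w ⟨⟨hw0, hwσ⟩, hw⟩ =>
      hasDerivAt_schwarzFunction hA hinj hw (hstrict w hw) (hderiv w hw)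
        (hasDerivAt_circleReflection (hstrict _ hwσ).hasDerivAt hw0)
    refine ⟨γ '' A₀, (isOpen_inter_conj_inv_preimage hA).image_of_hasStrictDerivAt
      (fun w hw => hstrict w hw.2) (fun w hw => hderiv w hw.2), image_mono hsphere,
      schwarzFunction γ A, ?_, ?_, ?_⟩
    · rintro _ ⟨w, hw, rfl⟩
      exact (hS w hw).differentiableAt.differentiableWithinAt
    · rintro _ ⟨w, hw, rfl⟩
      rw [schwarzFunction_apply_image hinj (hcirc hw), circleReflection_of_mem_unit_sphere γ hw]
    · rintro _ ⟨w, hw, rfl⟩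
      rw [(hS w (hsphere hw)).deriv, conj_inv_of_mem_unit_sphere hw]
      exact norm_neg_conj_div_sq_div hw (hderiv w (hcirc hw))
  · have h1A : (1 : ℂ) ∈ A := hcirc (by simp)
    have hacc : ∃ᶠ z in 𝓝[≠] γ 1, z ∈ γ '' sphere 0 1 := by
      simpa [circleMap] using frequently_mem_image_sphere (c := 0) (θ := 0) one_ne_zero
        (by simpa [circleMap] using (hstrict 1 h1A).hasDerivAt) (hderiv 1 h1A)
    exact (hS₁.analyticOnNhd hV).eqOn_of_preconnected_of_frequently_eq (hS₂.analyticOnNhd hV)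
      hVconn (hΓV ⟨1, by simp, rfl⟩) (hacc.mono fun z hz => (hS₁Γ z hz).trans (hS₂Γ z hz).symm)
end
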